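/- arXiv:1508.04671 — 5 statements merged into one kernel-verified Lean document; each statement's English description precedes it below -/
import Mathlib

section
/- Let φ : ℝ → [0,∞] be a convex function with φ(1) = 0 that is strictly convex on a neighborhood of 1, and let Q, P be probability measures on a measurable space with Q absolutely continuous with respect to P. Then the φ-divergence D_φ(Q,P) = ∫ φ(dQ/dP) dP is nonnegative, and D_φ(Q,P) = 0 if and only if Q = P. -/
open MeasureTheory

/-- Nonnegativity of the φ-divergence and characterization of its vanishing:
for φ nonnegative convex with φ(1) = 0, strictly convex on a neighborhood of 1,
and Q ≪ P probability measures, D_φ(Q,P) = ∫ φ(dQ/dP) dP ≥ 0 and it vanishes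
iff Q = P. -/
theorem phi_divergence_nonneg_eq_zero_iff
    {α : Type*} [MeasurableSpace α]
    (φ : ℝ → ℝ) (hφ_nonneg : ∀ x, 0 ≤ φ x) (hφ_one : φ 1 = 0)
    (hφ_convex : ConvexOn ℝ Set.univ φ)
    (hφ_strict : ∃ s : Set ℝ, s ∈ nhds (1 : ℝ) ∧ StrictConvexOn ℝ s φ)
    (Q P : Measure α) [IsProbabilityMeasure Q] [IsProbabilityMeasure P]
    (hQP : Q ≪ P)
    (hint : Integrable (fun x => φ ((Q.rnDeriv P x).toReal)) P) :
    0 ≤ ∫ x, φ ((Q.rnDeriv P x).toReal) ∂P ∧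
      ((∫ x, φ ((Q.rnDeriv P x).toReal) ∂P) = 0 ↔ Q = P) := by
  obtain ⟨s, hs_nhds, hs_strict⟩ := hφ_strict
  have h_nonneg_ae : 0 ≤ᵐ[P] fun x => φ ((Q.rnDeriv P x).toReal) :=
    Filter.Eventually.of_forall fun x => hφ_nonneg _
  have h_int_nonneg : 0 ≤ ∫ x, φ ((Q.rnDeriv P x).toReal) ∂P :=
    integral_nonneg fun x => hφ_nonneg _
  refine ⟨h_int_nonneg, ?_, ?_⟩
  · intro h_zero
    have key : ∀ x : ℝ, φ x = 0 → x = 1 := by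
      intro x hx
      by_contra hne
      obtain ⟨ε, hε, hball⟩ := Metric.mem_nhds_iff.mp hs_nhds
      have habs : 0 < |x - 1| := abs_pos.mpr (sub_ne_zero_of_ne hne)
      have hseg : ∀ t : ℝ, 0 ≤ t → t ≤ 1 → φ ((1 - t) * 1 + t * x) = 0 := by
        intro t ht0 ht1
        refine le_antisymm ?_ (hφ_nonneg _)
        have h := hφ_convex.2 (Set.mem_univ (1:ℝ)) (Set.mem_univ x)
          (by linarith : (0:ℝ) ≤ 1 - t) ht0 (by ring)
        simp only [smul_eq_mul] at h
        calc φ ((1 - t) * 1 + t * x) ≤ (1 - t) * φ 1 + t * φ x := h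
          _ = 0 := by rw [hφ_one, hx]; ring
      set δ : ℝ := min (ε / 2) |x - 1| with hδ
      have hδpos : 0 < δ := lt_min (by linarith) habs
      set t0 : ℝ := δ / |x - 1| with ht0def
      have ht0pos : 0 < t0 := div_pos hδpos habs
      have ht0le : t0 ≤ 1 := by
        rw [ht0def, div_le_one habs]; exact min_le_right _ _
      set b : ℝ := (1 - t0) * 1 + t0 * x with hbdef
      have hb_sub : b - 1 = t0 * (x - 1) := by rw [hbdef]; ring
      have hb_dist : |b - 1| = δ := by
        rw [hb_sub, abs_mul, abs_of_pos ht0pos, ht0def]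
        field_simp
      have hb_ne : b ≠ 1 := by
        intro h
        rw [h] at hb_dist
        simp at hb_dist
        linarith
      have hb_mem : b ∈ s := by
        apply hball
        simp only [Metric.mem_ball, Real.dist_eq, hb_dist]
        calc δ ≤ ε / 2 := min_le_left _ _
          _ < ε := by linarith
      have h1_mem : (1:ℝ) ∈ s := hball (Metric.mem_ball_self hε)
      have hmid := hs_strict.2 h1_mem hb_mem (Ne.symm hb_ne)
        (by norm_num : (0:ℝ) < 1/2) (by norm_num : (0:ℝ) < 1/2) (by norm_num)
      simp only [smul_eq_mul] at hmid
      have hφb : φ b = 0 := hseg t0 ht0pos.le ht0le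
      have hmid0 : φ ((1/2) * 1 + (1/2) * b) = 0 := by
        have heq : (1/2 : ℝ) * 1 + (1/2) * b = (1 - t0/2) * 1 + (t0/2) * x := by
          rw [hbdef]; ring
        rw [heq]
        exact hseg (t0/2) (by linarith) (by linarith)
      rw [hφ_one, hφb, hmid0] at hmid
      norm_num at hmid
    have h_ae : (fun x => φ ((Q.rnDeriv P x).toReal)) =ᵐ[P] 0 :=
      (integral_eq_zero_iff_of_nonneg_ae h_nonneg_ae hint).mp h_zero
    have h2 : Q.rnDeriv P =ᵐ[P] 1 := by
      filter_upwards [h_ae] with x hx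
      have h1 : (Q.rnDeriv P x).toReal = 1 := key _ hx
      exact ENNReal.toReal_eq_one_iff _ |>.mp h1
    calc Q = P.withDensity (Q.rnDeriv P) := (Measure.withDensity_rnDeriv_eq Q P hQP).symm
      _ = P.withDensity 1 := withDensity_congr_ae h2
      _ = P := by simp
  · intro h
    subst h
    have h1 : Q.rnDeriv Q =ᵐ[Q] 1 := Q.rnDeriv_self
    have : (fun x => φ ((Q.rnDeriv Q x).toReal)) =ᵐ[Q] fun _ => 0 := by
      filter_upwards [h1] with x hx
      simp [hx, hφ_one]
    rw [integral_congr_ae this]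
    simp
end

section
/- For φ₋₁(x) := (x−1)²/(2x) on (0,∞), the convex conjugate φ₋₁* satisfies φ₋₁*(t) = 1 − √(1−2t) for t ≤ 1/2 and φ₋₁*(t) = +∞ for t > 1/2. -/
/-!
For `x > 0` one has `t x - (x - 1)² / (2x) = 1 - ((1/2 - t) x + 1 / (2x))`. When `t ≤ 1/2`,
AM-GM bounds `a x + 1 / (2x)` below by `√(2a) = √(1 - 2t)` (with `a = 1/2 - t`), with equality at
`x = 1 / √(2a)` when `a > 0`; when `a = 0` the bound `0` is approached as `x → ∞`. When `t > 1/2`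
the term `(t - 1/2) x` is unbounded.
-/

open Real

/-- The values `t x - φ₋₁(x)`, `x > 0`, whose supremum is `φ₋₁*(t)`. -/
def modChiSqConjugateValues (t : ℝ) : Set ℝ :=
  {y | ∃ x : ℝ, 0 < x ∧ y = t * x - (x - 1) ^ 2 / (2 * x)}

lemma mul_sub_modChiSq_eq {x : ℝ} (t : ℝ) (hx : x ≠ 0) :
    t * x - (x - 1) ^ 2 / (2 * x) = 1 - ((1 / 2 - t) * x + 1 / (2 * x)) := by
  field_simp
  ring

lemma le_mul_add_one_div_of_sq_eq {a s x : ℝ} (hs : s ^ 2 = 2 * a) (hx : 0 < x) :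
    s ≤ a * x + 1 / (2 * x) := by
  have key : a * x + 1 / (2 * x) - s = (s * x - 1) ^ 2 / (2 * x) := by
    field_simp
    linear_combination (-x ^ 2) * hs
  rw [← sub_nonneg, key]
  positivity

lemma mul_one_div_add_one_div_eq_of_sq_eq {a s : ℝ} (hs : s ^ 2 = 2 * a) (hs0 : s ≠ 0) :
    a * (1 / s) + 1 / (2 * (1 / s)) = s := by
  field_simp
  linear_combination -hs

lemma sq_sqrt_one_sub_two_mul {t : ℝ} (ht : t ≤ 1 / 2) : √(1 - 2 * t) ^ 2 = 2 * (1 / 2 - t) := by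
  rw [sq_sqrt (by linarith)]
  ring

namespace modChiSqConjugateValues

lemma one_sub_sqrt_mem_upperBounds {t : ℝ} (ht : t ≤ 1 / 2) :
    1 - √(1 - 2 * t) ∈ upperBounds (modChiSqConjugateValues t) := by
  rintro y ⟨x, hx, rfl⟩
  have h := le_mul_add_one_div_of_sq_eq (a := 1 / 2 - t) (sq_sqrt_one_sub_two_mul ht) hx
  rw [mul_sub_modChiSq_eq t hx.ne']
  linarith

lemma one_sub_sqrt_mem {t : ℝ} (ht : t < 1 / 2) :
    1 - √(1 - 2 * t) ∈ modChiSqConjugateValues t := by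
  have hs0 : 0 < √(1 - 2 * t) := sqrt_pos.2 (by linarith)
  have hx : 0 < 1 / √(1 - 2 * t) := by positivity
  refine ⟨_, hx, ?_⟩
  rw [mul_sub_modChiSq_eq t hx.ne',
    mul_one_div_add_one_div_eq_of_sq_eq (sq_sqrt_one_sub_two_mul ht.le) hs0.ne']

lemma isLUB_one_half : IsLUB (modChiSqConjugateValues (1 / 2)) 1 := by
  refine ⟨by simpa using one_sub_sqrt_mem_upperBounds (le_refl (1 / 2)), fun b hb => ?_⟩
  by_contra! hb1
  have hx : 0 < 1 / (1 - b) := by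
    have : 0 < 1 - b := by linarith
    positivity
  -- at `x = 1 / (1 - b)` the value is `(1 + b) / 2 > b`
  have hmem := hb ⟨_, hx, rfl⟩
  rw [mul_sub_modChiSq_eq _ hx.ne'] at hmem
  field_simp at hmem
  nlinarith

lemma not_bddAbove {t : ℝ} (ht : 1 / 2 < t) : ¬BddAbove (modChiSqConjugateValues t) := by
  rw [not_bddAbove_iff]
  intro b
  set x := max 1 (b / (t - 1 / 2))
  have hx1 : 1 ≤ x := le_max_left _ _
  have hx : 0 < x := by linarith
  have hbx : b ≤ (t - 1 / 2) * x := by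
    rw [← div_le_iff₀' (by linarith)]
    exact le_max_right _ _
  have hinv : 1 / (2 * x) ≤ 1 / 2 := by gcongr; linarith
  refine ⟨_, ⟨x, hx, rfl⟩, ?_⟩
  rw [mul_sub_modChiSq_eq t hx.ne']
  linarith

end modChiSqConjugateValues

open modChiSqConjugateValues in
/-- The convex conjugate of φ₋₁(x) = (x-1)²/(2x) (with φ₋₁ = +∞ on x ≤ 0,
encoded by taking the supremum over the domain x > 0) equals 1 - √(1-2t) for
t ≤ 1/2 and +∞ (i.e. the set is unbounded above) for t > 1/2. -/
theorem conjugate_of_modified_chisq (t : ℝ) :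
    (t ≤ 1 / 2 → IsLUB {y : ℝ | ∃ x : ℝ, 0 < x ∧ y = t * x - (x - 1) ^ 2 / (2 * x)}
        (1 - Real.sqrt (1 - 2 * t))) ∧
    (1 / 2 < t → ¬ BddAbove {y : ℝ | ∃ x : ℝ, 0 < x ∧ y = t * x - (x - 1) ^ 2 / (2 * x)}) := by
  refine ⟨fun ht => ?_, not_bddAbove⟩
  change IsLUB (modChiSqConjugateValues t) _
  rcases ht.lt_or_eq with ht | rfl
  · exact IsGreatest.isLUB ⟨one_sub_sqrt_mem ht, one_sub_sqrt_mem_upperBounds ht.le⟩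
  · norm_num [isLUB_one_half]
end

section
/- Let P be a probability measure on X × Y with marginals P₁, P₂ and P^⊥ := P₁ ⊗ P₂. Suppose P is absolutely continuous with respect to P^⊥ with density h := dP/dP^⊥. Let φ be differentiable and strictly convex on the interior of its domain with finite I_φ(P) := ∫ φ(h) dP^⊥, and let F be a class of measurable functions f : X × Y → ℝ containing φ'(h), each satisfying ∫|f| dP < ∞. Then I_φ(P) = sup_{f ∈ F} { ∫ f dP − ∫ φ*(f) dP^⊥ }, with the supremum attained at f = φ'(h). -/
open MeasureTheory

/-- Dual representation of the φ-mutual information: with P^⊥ the product of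
the marginals of P, h = dP/dP^⊥, φ differentiable and strictly convex on its
domain D with conjugate φ* (characterized by the Fenchel–Young inequality and
its equality case at φ'), and F a class of integrable functions containing
φ'(h), the φ-mutual information I_φ(P) = ∫ φ(h) dP^⊥ is the supremum over
f ∈ F of ∫ f dP - ∫ φ*(f) dP^⊥, attained at f = φ'(h). -/
theorem dual_representation_phi_MI
    {X Y : Type*} [MeasurableSpace X] [MeasurableSpace Y]
    (P : Measure (X × Y)) [IsProbabilityMeasure P]
    (φ φ' φstar : ℝ → ℝ) (D : Set ℝ) (hD : Convex ℝ D)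
    (hsconv : StrictConvexOn ℝ D φ)
    (hderiv : ∀ x ∈ D, HasDerivAt φ (φ' x) x)
    (hFY : ∀ t : ℝ, ∀ x ∈ D, t * x - φstar t ≤ φ x)
    (hFYeq : ∀ x ∈ D, φ' x * x - φstar (φ' x) = φ x)
    (h : X × Y → ℝ)
    (hac : P ≪ (P.map Prod.fst).prod (P.map Prod.snd))
    (hdens : ∀ᵐ p ∂((P.map Prod.fst).prod (P.map Prod.snd)),
      (P.rnDeriv ((P.map Prod.fst).prod (P.map Prod.snd)) p).toReal = h p)
    (hhD : ∀ p, h p ∈ D)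
    (hIfin : Integrable (fun p => φ (h p)) ((P.map Prod.fst).prod (P.map Prod.snd)))
    (F : Set ((X × Y) → ℝ))
    (hmem : (fun p => φ' (h p)) ∈ F)
    (hFint : ∀ f ∈ F, Integrable f P ∧
      Integrable (fun p => φstar (f p)) ((P.map Prod.fst).prod (P.map Prod.snd))) :
    (∀ f ∈ F,
      ∫ p, f p ∂P - ∫ p, φstar (f p) ∂((P.map Prod.fst).prod (P.map Prod.snd))
        ≤ ∫ p, φ (h p) ∂((P.map Prod.fst).prod (P.map Prod.snd))) ∧
    (∫ p, φ' (h p) ∂P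
        - ∫ p, φstar (φ' (h p)) ∂((P.map Prod.fst).prod (P.map Prod.snd))
      = ∫ p, φ (h p) ∂((P.map Prod.fst).prod (P.map Prod.snd))) := by
  set Q := (P.map Prod.fst).prod (P.map Prod.snd) with hQ
  haveI : IsProbabilityMeasure (P.map Prod.fst) :=
    Measure.isProbabilityMeasure_map measurable_fst.aemeasurable
  haveI : IsProbabilityMeasure (P.map Prod.snd) :=
    Measure.isProbabilityMeasure_map measurable_snd.aemeasurable
  -- change of measure: ∫ f dP = ∫ h f dQ
  have key : ∀ f : (X × Y) → ℝ, ∫ p, f p ∂P = ∫ p, h p * f p ∂Q := by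
    intro f
    rw [← MeasureTheory.integral_rnDeriv_smul hac (f := f)]
    refine integral_congr_ae ?_
    filter_upwards [hdens] with p hp
    simp [hp, smul_eq_mul]
  have hintsmul : ∀ f : (X × Y) → ℝ, Integrable f P →
      Integrable (fun p => h p * f p) Q := by
    intro f hf
    have := (MeasureTheory.integrable_rnDeriv_smul_iff hac (f := f)).mpr hf
    refine this.congr ?_
    filter_upwards [hdens] with p hp
    simp [hp, smul_eq_mul]
  constructor
  · intro f hf
    obtain ⟨hf1, hf2⟩ := hFint f hf
    rw [key f, ← integral_sub (hintsmul f hf1) hf2]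
    refine integral_mono ((hintsmul f hf1).sub hf2) hIfin ?_
    intro p
    have := hFY (f p) (h p) (hhD p)
    simpa [mul_comm] using this
  · obtain ⟨hf1, hf2⟩ := hFint _ hmem
    rw [key _, ← integral_sub (hintsmul _ hf1) hf2]
    refine integral_congr_ae (Filter.Eventually.of_forall fun p => ?_)
    have := hFYeq (h p) (hhD p)
    simpa [mul_comm] using this
end

section
/- For every φ satisfying the standing assumptions and every joint distribution P with K(P,P^⊥) < ∞, the Bahadur slope s_φ := inf{ K(Q, P^⊥) : 𝒟_φ(Q, Q^⊥) ≥ D_φ(P, P^⊥) } satisfies s_φ ≤ K(P, P^⊥), with equality when φ = φ₁ (Kullback–Leibler). In particular, the KL-mutual-information test is the most Bahadur-efficient among φ-MI tests. -/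
/-!
`P` itself satisfies both constraints, so both infima are at most `K(P, P^⊥)`. For the
Kullback–Leibler case the reverse bound holds for every admissible `Q`: each term
`∫ log h_θ dQ - ∫ (h_θ - 1) dQ^⊥` is at most `K(Q, Q^⊥)` (Donsker–Varadhan together with
`log t ≤ t - 1`), and `K(Q, P^⊥) = K(Q, Q^⊥) + K(Q₁, P₁) + K(Q₂, P₂) ≥ K(Q, Q^⊥)` because
`dQ^⊥/dP^⊥` factors over the two coordinates (`Qᵢ`, `Pᵢ` are the marginals of `Q`, `P`).
-/

open MeasureTheory

/-- Kullback–Leibler divergence K(Q,P) = ∫ log(dQ/dP) dQ. -/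
noncomputable def klDiv {α : Type*} [MeasurableSpace α] (Q P : Measure α) : ℝ :=
  ∫ x, Real.log ((Q.rnDeriv P x).toReal) ∂Q

/-- Pseudo-divergence 𝒟_φ(Q,Q^⊥) = sup_θ { ∫ φ'(h_θ) dQ - ∫ φ*(φ'(h_θ)) dQ^⊥ }. -/
noncomputable def pseudoDiv {Ω Θ : Type*} [MeasurableSpace Ω]
    (φ' φstar : ℝ → ℝ) (hfam : Θ → Ω → ℝ) (Q Qperp : Measure Ω) : ℝ :=
  ⨆ θ : Θ, (∫ p, φ' (hfam θ p) ∂Q - ∫ p, φstar (φ' (hfam θ p)) ∂Qperp)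

open Real

lemma log_toReal_mul {a b : ENNReal} (ha : 0 < a) (ha' : a < ⊤) (hb : 0 < b) (hb' : b < ⊤) :
    log (a * b).toReal = log a.toReal + log b.toReal := by
  rw [ENNReal.toReal_mul, log_mul (ENNReal.toReal_pos ha.ne' ha'.ne).ne'
    (ENNReal.toReal_pos hb.ne' hb'.ne).ne']

section Divergence

variable {α : Type*} [MeasurableSpace α] {μ ν ξ : Measure α}

lemma klDiv_eq_integral_llr (μ ν : Measure α) : klDiv μ ν = ∫ x, llr μ ν x ∂μ := rfl

lemma ae_rnDeriv_pos_lt_top [SigmaFinite μ] [μ.HaveLebesgueDecomposition ν] (hμν : μ ≪ ν) :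
    ∀ᵐ x ∂μ, 0 < μ.rnDeriv ν x ∧ μ.rnDeriv ν x < ⊤ :=
  (Measure.rnDeriv_pos hμν).and (hμν.ae_le (Measure.rnDeriv_lt_top μ ν))

lemma klDiv_nonneg [IsProbabilityMeasure μ] [IsProbabilityMeasure ν] (hμν : μ ≪ ν)
    (hint : Integrable (llr μ ν) μ) : 0 ≤ klDiv μ ν := by
  rw [klDiv_eq_integral_llr]
  simpa using InformationTheory.integral_llr_add_sub_measure_univ_nonneg hμν hint

lemma integrable_llr_self (μ : Measure α) [SigmaFinite μ] : Integrable (llr μ μ) μ :=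
  (integrable_zero _ _ μ).congr (llr_self μ).symm

/-- Donsker–Varadhan: `K(μ, ν) - (∫ f dμ - log ∫ exp f dν)` is `K(μ, ν.tilted f) ≥ 0`. -/
lemma integral_sub_log_integral_exp_le_klDiv [IsProbabilityMeasure μ] [IsProbabilityMeasure ν]
    {f : α → ℝ} (hμν : μ ≪ ν) (hfμ : Integrable f μ) (hfν : Integrable (fun x ↦ exp (f x)) ν)
    (hint : Integrable (llr μ ν) μ) :
    ∫ x, f x ∂μ - log (∫ x, exp (f x) ∂ν) ≤ klDiv μ ν := by
  have : IsProbabilityMeasure (ν.tilted f) := isProbabilityMeasure_tilted hfν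
  have h := klDiv_nonneg (hμν.trans (absolutelyContinuous_tilted hfν))
    (integrable_llr_tilted_right hμν hfμ hint hfν)
  rw [klDiv_eq_integral_llr, integral_llr_tilted_right hμν hfμ hfν hint] at h
  rw [klDiv_eq_integral_llr]
  linarith

lemma integral_log_sub_integral_sub_one_le_klDiv [IsProbabilityMeasure μ]
    [IsProbabilityMeasure ν] {h : α → ℝ} (hpos : ∀ x, 0 < h x) (hμν : μ ≪ ν)
    (hlog : Integrable (fun x ↦ log (h x)) μ) (hh : Integrable h ν)
    (hint : Integrable (llr μ ν) μ) :
    ∫ x, log (h x) ∂μ - ∫ x, (h x - 1) ∂ν ≤ klDiv μ ν := by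
  have hexp : Integrable (fun x ↦ exp (log (h x))) ν := by simpa only [exp_log (hpos _)] using hh
  have hDV := integral_sub_log_integral_exp_le_klDiv hμν hlog hexp hint
  have hh_pos := integral_exp_pos hexp
  simp only [exp_log (hpos _)] at hDV hh_pos
  have hlog_le := log_le_sub_one_of_pos hh_pos
  rw [integral_sub hh (integrable_const 1)]
  simp only [integral_const, probReal_univ, smul_eq_mul, mul_one]
  linarith

lemma llr_ae_eq_add [SigmaFinite μ] [SigmaFinite ν] [SigmaFinite ξ] (hμν : μ ≪ ν) (hνξ : ν ≪ ξ) :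
    llr μ ξ =ᵐ[μ] llr μ ν + llr ν ξ := by
  filter_upwards [(hμν.trans hνξ).ae_le (Measure.rnDeriv_mul_rnDeriv hμν),
    ae_rnDeriv_pos_lt_top hμν, hμν.ae_le (ae_rnDeriv_pos_lt_top hνξ)] with x hx h₁ h₂
  rw [Pi.add_apply, llr, llr, llr, ← hx, Pi.mul_apply, log_toReal_mul h₁.1 h₁.2 h₂.1 h₂.2]

lemma klDiv_eq_klDiv_add_integral_llr [SigmaFinite μ] [SigmaFinite ν] [SigmaFinite ξ]
    (hμν : μ ≪ ν) (hνξ : ν ≪ ξ) (hint : Integrable (llr μ ν) μ)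
    (hint' : Integrable (llr μ ξ) μ) :
    klDiv μ ξ = klDiv μ ν + ∫ x, llr ν ξ x ∂μ := by
  have hsplit := llr_ae_eq_add hμν hνξ
  have hνξ_int : Integrable (llr ν ξ) μ :=
    (hint'.sub hint).congr (by filter_upwards [hsplit] with x hx; simp [hx])
  rw [klDiv_eq_integral_llr, klDiv_eq_integral_llr, ← integral_add hint hνξ_int]
  exact integral_congr_ae hsplit

end Divergence

section Product

variable {X Y : Type*} [MeasurableSpace X] [MeasurableSpace Y]
  {μ₁ ν₁ : Measure X} {μ₂ ν₂ : Measure Y}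
  [SigmaFinite μ₁] [SigmaFinite ν₁] [SigmaFinite μ₂] [SigmaFinite ν₂]

lemma rnDeriv_prod_ae (h₁ : μ₁ ≪ ν₁) (h₂ : μ₂ ≪ ν₂) :
    (μ₁.prod μ₂).rnDeriv (ν₁.prod ν₂) =ᵐ[ν₁.prod ν₂]
      fun p ↦ μ₁.rnDeriv ν₁ p.1 * μ₂.rnDeriv ν₂ p.2 := by
  have hdensity : μ₁.prod μ₂ =
      (ν₁.prod ν₂).withDensity fun p ↦ μ₁.rnDeriv ν₁ p.1 * μ₂.rnDeriv ν₂ p.2 := by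
    rw [← prod_withDensity (Measure.measurable_rnDeriv _ _) (Measure.measurable_rnDeriv _ _),
      Measure.withDensity_rnDeriv_eq _ _ h₁, Measure.withDensity_rnDeriv_eq _ _ h₂]
  rw [hdensity]
  exact Measure.rnDeriv_withDensity _ (by fun_prop)

lemma llr_prod_ae (h₁ : μ₁ ≪ ν₁) (h₂ : μ₂ ≪ ν₂) :
    llr (μ₁.prod μ₂) (ν₁.prod ν₂) =ᵐ[μ₁.prod μ₂] fun p ↦ llr μ₁ ν₁ p.1 + llr μ₂ ν₂ p.2 := by
  filter_upwards [(h₁.prod h₂).ae_le (rnDeriv_prod_ae h₁ h₂),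
    Measure.quasiMeasurePreserving_fst.ae (ae_rnDeriv_pos_lt_top h₁),
    Measure.quasiMeasurePreserving_snd.ae (ae_rnDeriv_pos_lt_top h₂)] with p hp hp₁ hp₂
  rw [llr, hp, log_toReal_mul hp₁.1 hp₁.2 hp₂.1 hp₂.2, llr, llr]

end Product

section MutualInformation

variable {X Y : Type*} [MeasurableSpace X] [MeasurableSpace Y]

instance isProbabilityMeasure_map_fst (μ : Measure (X × Y)) [IsProbabilityMeasure μ] :
    IsProbabilityMeasure (μ.map Prod.fst) :=
  Measure.isProbabilityMeasure_map measurable_fst.aemeasurable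

instance isProbabilityMeasure_map_snd (μ : Measure (X × Y)) [IsProbabilityMeasure μ] :
    IsProbabilityMeasure (μ.map Prod.snd) :=
  Measure.isProbabilityMeasure_map measurable_snd.aemeasurable

variable {Q : Measure (X × Y)} [IsProbabilityMeasure Q]
  {P₁ : Measure X} {P₂ : Measure Y} [IsProbabilityMeasure P₁] [IsProbabilityMeasure P₂]

lemma integral_llr_prod_map_fst_map_snd
    (hQ : Q ≪ (Q.map Prod.fst).prod (Q.map Prod.snd))
    (h₁ : Q.map Prod.fst ≪ P₁) (h₂ : Q.map Prod.snd ≪ P₂)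
    (hint₁ : Integrable (llr (Q.map Prod.fst) P₁) (Q.map Prod.fst))
    (hint₂ : Integrable (llr (Q.map Prod.snd) P₂) (Q.map Prod.snd)) :
    ∫ p, llr ((Q.map Prod.fst).prod (Q.map Prod.snd)) (P₁.prod P₂) p ∂Q
      = klDiv (Q.map Prod.fst) P₁ + klDiv (Q.map Prod.snd) P₂ := by
  have hint₁' : Integrable (fun p ↦ llr (Q.map Prod.fst) P₁ p.1) Q :=
    hint₁.comp_measurable measurable_fst
  have hint₂' : Integrable (fun p ↦ llr (Q.map Prod.snd) P₂ p.2) Q :=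
    hint₂.comp_measurable measurable_snd
  rw [integral_congr_ae (hQ.ae_le (llr_prod_ae h₁ h₂)), integral_add hint₁' hint₂',
    klDiv_eq_integral_llr, klDiv_eq_integral_llr,
    integral_map measurable_fst.aemeasurable (measurable_llr _ _).aestronglyMeasurable,
    integral_map measurable_snd.aemeasurable (measurable_llr _ _).aestronglyMeasurable]

lemma klDiv_prod_map_fst_map_snd_le
    (hQ : Q ≪ (Q.map Prod.fst).prod (Q.map Prod.snd))
    (h₁ : Q.map Prod.fst ≪ P₁) (h₂ : Q.map Prod.snd ≪ P₂)
    (hint : Integrable (llr Q ((Q.map Prod.fst).prod (Q.map Prod.snd))) Q)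
    (hint' : Integrable (llr Q (P₁.prod P₂)) Q)
    (hint₁ : Integrable (llr (Q.map Prod.fst) P₁) (Q.map Prod.fst))
    (hint₂ : Integrable (llr (Q.map Prod.snd) P₂) (Q.map Prod.snd)) :
    klDiv Q ((Q.map Prod.fst).prod (Q.map Prod.snd)) ≤ klDiv Q (P₁.prod P₂) := by
  rw [klDiv_eq_klDiv_add_integral_llr hQ (h₁.prod h₂) hint hint',
    integral_llr_prod_map_fst_map_snd hQ h₁ h₂ hint₁ hint₂]
  linarith [klDiv_nonneg h₁ hint₁, klDiv_nonneg h₂ hint₂]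

end MutualInformation

theorem bahadur_slope_KL_optimal_general
    {X Y : Type*} [MeasurableSpace X] [MeasurableSpace Y]
    {Θ : Type*} [Nonempty Θ]
    (P : Measure (X × Y)) [IsProbabilityMeasure P]
    (φ φ' φstar : ℝ → ℝ)
    (hfam : Θ → (X × Y) → ℝ) (hpos : ∀ θ p, 0 < hfam θ p)
    (hPac : P ≪ (P.map Prod.fst).prod (P.map Prod.snd))
    (hPint : Integrable
      (fun p => Real.log ((P.rnDeriv ((P.map Prod.fst).prod (P.map Prod.snd)) p).toReal)) P)
    -- P belongs to the model: the pseudo-divergences coincide with the true divergences at P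
    (hmodel : pseudoDiv φ' φstar hfam P ((P.map Prod.fst).prod (P.map Prod.snd))
      = ∫ p, φ ((P.rnDeriv ((P.map Prod.fst).prod (P.map Prod.snd)) p).toReal)
          ∂((P.map Prod.fst).prod (P.map Prod.snd)))
    (hmodelKL : (⨆ θ : Θ, (∫ p, Real.log (hfam θ p) ∂P
        - ∫ p, (hfam θ p - 1) ∂((P.map Prod.fst).prod (P.map Prod.snd))))
      = klDiv P ((P.map Prod.fst).prod (P.map Prod.snd)))
    (Sφ SKL : Set ℝ)
    (hSφ : Sφ = {r : ℝ | ∃ Q : Measure (X × Y), IsProbabilityMeasure Q ∧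
      (∫ p, φ ((P.rnDeriv ((P.map Prod.fst).prod (P.map Prod.snd)) p).toReal)
          ∂((P.map Prod.fst).prod (P.map Prod.snd)))
        ≤ pseudoDiv φ' φstar hfam Q ((Q.map Prod.fst).prod (Q.map Prod.snd)) ∧
      r = klDiv Q ((P.map Prod.fst).prod (P.map Prod.snd))})
    (hSKL : SKL = {r : ℝ | ∃ Q : Measure (X × Y), IsProbabilityMeasure Q ∧
      Q ≪ (P.map Prod.fst).prod (P.map Prod.snd) ∧
      Q ≪ (Q.map Prod.fst).prod (Q.map Prod.snd) ∧
      Q.map Prod.fst ≪ P.map Prod.fst ∧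
      Q.map Prod.snd ≪ P.map Prod.snd ∧
      Integrable
        (fun p => Real.log ((Q.rnDeriv ((P.map Prod.fst).prod (P.map Prod.snd)) p).toReal)) Q ∧
      Integrable
        (fun p => Real.log ((Q.rnDeriv ((Q.map Prod.fst).prod (Q.map Prod.snd)) p).toReal)) Q ∧
      Integrable (fun x => Real.log (((Q.map Prod.fst).rnDeriv (P.map Prod.fst) x).toReal))
        (Q.map Prod.fst) ∧
      Integrable (fun y => Real.log (((Q.map Prod.snd).rnDeriv (P.map Prod.snd) y).toReal))
        (Q.map Prod.snd) ∧
      (∀ θ : Θ, Integrable (fun p => Real.log (hfam θ p)) Q ∧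
        Integrable (hfam θ) ((Q.map Prod.fst).prod (Q.map Prod.snd))) ∧
      klDiv P ((P.map Prod.fst).prod (P.map Prod.snd))
        ≤ (⨆ θ : Θ, (∫ p, Real.log (hfam θ p) ∂Q
            - ∫ p, (hfam θ p - 1) ∂((Q.map Prod.fst).prod (Q.map Prod.snd)))) ∧
      r = klDiv Q ((P.map Prod.fst).prod (P.map Prod.snd))})
    (hPKL : ∀ θ : Θ, Integrable (fun p => Real.log (hfam θ p)) P ∧
      Integrable (hfam θ) ((P.map Prod.fst).prod (P.map Prod.snd)))
    (hbddφ : BddBelow Sφ) :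
    sInf Sφ ≤ klDiv P ((P.map Prod.fst).prod (P.map Prod.snd)) ∧
    sInf SKL = klDiv P ((P.map Prod.fst).prod (P.map Prod.snd)) := by
  set Pp := (P.map Prod.fst).prod (P.map Prod.snd)
  have hlower : ∀ r ∈ SKL, klDiv P Pp ≤ r := by
    rw [hSKL]
    rintro _ ⟨Q, _, -, hQQp, hQ₁, hQ₂, hint, hint', hint₁, hint₂, hθ, hge, rfl⟩
    calc klDiv P Pp ≤ _ := hge
      _ ≤ klDiv Q ((Q.map Prod.fst).prod (Q.map Prod.snd)) := ciSup_le fun θ ↦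
          integral_log_sub_integral_sub_one_le_klDiv (hpos θ) hQQp (hθ θ).1 (hθ θ).2 hint'
      _ ≤ klDiv Q Pp := klDiv_prod_map_fst_map_snd_le hQQp hQ₁ hQ₂ hint' hint hint₁ hint₂
  have hmem : klDiv P Pp ∈ SKL := by
    rw [hSKL]
    exact ⟨P, inferInstance, hPac, hPac, .rfl, .rfl, hPint, hPint, integrable_llr_self _,
      integrable_llr_self _, hPKL, hmodelKL.ge, rfl⟩
  refine ⟨csInf_le hbddφ (hSφ ▸ ⟨P, inferInstance, hmodel.ge, rfl⟩), ?_⟩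
  exact le_antisymm (csInf_le ⟨_, hlower⟩ hmem) (le_csInf ⟨_, hmem⟩ hlower)

/-- The Bahadur slope s_φ = inf{ K(Q,P^⊥) : 𝒟_φ(Q,Q^⊥) ≥ D_φ(P,P^⊥) } satisfies
s_φ ≤ K(P,P^⊥) for every φ (since P lies in the model, 𝒟_φ(P,P^⊥) = D_φ(P,P^⊥)),
with equality for the Kullback–Leibler case φ = φ₁ (φ₁' = log, φ₁*(φ₁'(x)) = x - 1):
the KL mutual-information test is the most Bahadur-efficient among φ-MI tests. -/
theorem bahadur_slope_KL_optimal
    {X Y : Type*} [MeasurableSpace X] [MeasurableSpace Y]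
    {Θ : Type*} [Nonempty Θ]
    (P : Measure (X × Y)) [IsProbabilityMeasure P]
    (φ φ' φstar : ℝ → ℝ)
    (hFY : ∀ t : ℝ, ∀ x : ℝ, 0 ≤ x → t * x - φstar t ≤ φ x)
    (hfam : Θ → (X × Y) → ℝ) (hpos : ∀ θ p, 0 < hfam θ p)
    (hPac : P ≪ (P.map Prod.fst).prod (P.map Prod.snd))
    (hPint : Integrable
      (fun p => Real.log ((P.rnDeriv ((P.map Prod.fst).prod (P.map Prod.snd)) p).toReal)) P)
    -- P belongs to the model: the pseudo-divergences coincide with the true divergences at P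
    (hmodel : pseudoDiv φ' φstar hfam P ((P.map Prod.fst).prod (P.map Prod.snd))
      = ∫ p, φ ((P.rnDeriv ((P.map Prod.fst).prod (P.map Prod.snd)) p).toReal)
          ∂((P.map Prod.fst).prod (P.map Prod.snd)))
    (hmodelKL : (⨆ θ : Θ, (∫ p, Real.log (hfam θ p) ∂P
        - ∫ p, (hfam θ p - 1) ∂((P.map Prod.fst).prod (P.map Prod.snd))))
      = klDiv P ((P.map Prod.fst).prod (P.map Prod.snd)))
    (Sφ SKL : Set ℝ)
    (hSφ : Sφ = {r : ℝ | ∃ Q : Measure (X × Y), IsProbabilityMeasure Q ∧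
      (∫ p, φ ((P.rnDeriv ((P.map Prod.fst).prod (P.map Prod.snd)) p).toReal)
          ∂((P.map Prod.fst).prod (P.map Prod.snd)))
        ≤ pseudoDiv φ' φstar hfam Q ((Q.map Prod.fst).prod (Q.map Prod.snd)) ∧
      r = klDiv Q ((P.map Prod.fst).prod (P.map Prod.snd))})
    (hSKL : SKL = {r : ℝ | ∃ Q : Measure (X × Y), IsProbabilityMeasure Q ∧
      Q ≪ (P.map Prod.fst).prod (P.map Prod.snd) ∧
      Q ≪ (Q.map Prod.fst).prod (Q.map Prod.snd) ∧
      Q.map Prod.fst ≪ P.map Prod.fst ∧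
      Q.map Prod.snd ≪ P.map Prod.snd ∧
      Integrable
        (fun p => Real.log ((Q.rnDeriv ((P.map Prod.fst).prod (P.map Prod.snd)) p).toReal)) Q ∧
      Integrable
        (fun p => Real.log ((Q.rnDeriv ((Q.map Prod.fst).prod (Q.map Prod.snd)) p).toReal)) Q ∧
      Integrable (fun x => Real.log (((Q.map Prod.fst).rnDeriv (P.map Prod.fst) x).toReal))
        (Q.map Prod.fst) ∧
      Integrable (fun y => Real.log (((Q.map Prod.snd).rnDeriv (P.map Prod.snd) y).toReal))
        (Q.map Prod.snd) ∧
      (∀ θ : Θ, Integrable (fun p => Real.log (hfam θ p)) Q ∧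
        Integrable (hfam θ) ((Q.map Prod.fst).prod (Q.map Prod.snd))) ∧
      klDiv P ((P.map Prod.fst).prod (P.map Prod.snd))
        ≤ (⨆ θ : Θ, (∫ p, Real.log (hfam θ p) ∂Q
            - ∫ p, (hfam θ p - 1) ∂((Q.map Prod.fst).prod (Q.map Prod.snd)))) ∧
      r = klDiv Q ((P.map Prod.fst).prod (P.map Prod.snd))})
    (hPKL : ∀ θ : Θ, Integrable (fun p => Real.log (hfam θ p)) P ∧
      Integrable (hfam θ) ((P.map Prod.fst).prod (P.map Prod.snd)))
    (hbddφ : BddBelow Sφ) (hbddKL : BddBelow SKL) :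
    sInf Sφ ≤ klDiv P ((P.map Prod.fst).prod (P.map Prod.snd)) ∧
    sInf SKL = klDiv P ((P.map Prod.fst).prod (P.map Prod.snd)) :=
  bahadur_slope_KL_optimal_general P φ φ' φstar hfam hpos hPac hPint hmodel hmodelKL Sφ SKL hSφ hSKL
    hPKL hbddφ
end

section
/- Let Q be a probability measure on Ω = X × Y with density g := dQ/dQ^⊥ with respect to the product of its marginals Q^⊥, and let A, B be disjoint measurable subsets of ℝ with c₁ := Q(φ'(h)∈B) and c₂ := Q(φ'(h)∈A) for a fixed measurable function h. For n large enough, the function g_n := g + (c₁/n) g·1{φ'(h)∈A} − (c₂/n) g·1{φ'(h)∈B} is nonnegative and satisfies ∫ g_n dQ^⊥ = 1; moreover, if inf A > sup B, c₁ > 0, c₂ > 0, then ∫ φ'(h) g_n dQ^⊥ ≥ ∫ φ'(h) dQ + (c₁c₂/n)(inf A − sup B) > ∫ φ'(h) dQ. -/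
open MeasureTheory

/-!
Write `ψ = φ'(h)`. Since `Q(ψ ∈ A) = c₂` and `Q(ψ ∈ B) = c₁`, the perturbation adds the mass
`c₁ c₂ / n` on `{ψ ∈ A}` and removes the same mass from `{ψ ∈ B}`, so `g_n` is again a density
with respect to `Q^⊥`; it stays nonnegative as soon as `c₂ / n ≤ 1`. The moved mass goes from
where `ψ ≤ sup B` to where `ψ ≥ inf A`, which raises `∫ ψ g_n dQ^⊥` by at least
`c₁ c₂ / n · (inf A - sup B)`.
-/

lemma add_indicator_sub_indicator_nonneg {Ω : Type*} {g : Ω → ℝ} {s t : Set Ω}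
    (hst : Disjoint s t) {a b : ℝ} (ha : 0 ≤ a) (hb : b ≤ 1) {p : Ω} (hg : 0 ≤ g p) :
    0 ≤ g p + a * s.indicator g p - b * t.indicator g p := by
  by_cases hpt : p ∈ t
  · rw [s.indicator_of_notMem (hst.notMem_of_mem_right hpt), t.indicator_of_mem hpt]
    nlinarith
  · rw [t.indicator_of_notMem hpt]
    have := mul_nonneg ha (Set.indicator_apply_nonneg (s := s) fun _ => hg)
    linarith

section Perturbation

variable {Ω : Type*} [MeasurableSpace Ω] {μ : Measure Ω}

lemma toReal_withDensity_ofReal_apply {g : Ω → ℝ} {s : Set Ω} (hs : MeasurableSet s)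
    (hg0 : 0 ≤ᵐ[μ.restrict s] g) (hgm : AEStronglyMeasurable g (μ.restrict s)) :
    (μ.withDensity (fun p => ENNReal.ofReal (g p)) s).toReal = ∫ p in s, g p ∂μ := by
  rw [withDensity_apply _ hs, integral_eq_lintegral_of_nonneg_ae hg0 hgm]

lemma integral_add_indicator_sub_indicator {f : Ω → ℝ} (hf : Integrable f μ) {s t : Set Ω}
    (hs : MeasurableSet s) (ht : MeasurableSet t) (a b : ℝ) :
    ∫ p, (f p + a * s.indicator f p - b * t.indicator f p) ∂μ
      = ∫ p, f p ∂μ + a * ∫ p in s, f p ∂μ - b * ∫ p in t, f p ∂μ := by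
  have hfs : Integrable (fun p => a * s.indicator f p) μ := (hf.indicator hs).const_mul a
  have hffs : Integrable (fun p => f p + a * s.indicator f p) μ := hf.add hfs
  rw [integral_sub hffs ((hf.indicator ht).const_mul b),
    integral_add hf hfs, integral_const_mul, integral_const_mul,
    integral_indicator hs, integral_indicator ht]

lemma mul_setIntegral_le_setIntegral_mul {g ψ : Ω → ℝ} {s : Set Ω} (hs : MeasurableSet s)
    (hg0 : ∀ p ∈ s, 0 ≤ g p) (hg : IntegrableOn g s μ)
    (hψg : IntegrableOn (fun p => ψ p * g p) s μ) {c : ℝ} (hc : ∀ p ∈ s, c ≤ ψ p) :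
    c * ∫ p in s, g p ∂μ ≤ ∫ p in s, ψ p * g p ∂μ := by
  rw [← integral_const_mul]
  exact setIntegral_mono_on (hg.const_mul c) hψg hs
    fun p hp => mul_le_mul_of_nonneg_right (hc p hp) (hg0 p hp)

lemma setIntegral_mul_le_mul_setIntegral {g ψ : Ω → ℝ} {s : Set Ω} (hs : MeasurableSet s)
    (hg0 : ∀ p ∈ s, 0 ≤ g p) (hg : IntegrableOn g s μ)
    (hψg : IntegrableOn (fun p => ψ p * g p) s μ) {c : ℝ} (hc : ∀ p ∈ s, ψ p ≤ c) :
    ∫ p in s, ψ p * g p ∂μ ≤ c * ∫ p in s, g p ∂μ := by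
  rw [← integral_const_mul]
  exact setIntegral_mono_on hψg (hg.const_mul c) hs
    fun p hp => mul_le_mul_of_nonneg_right (hc p hp) (hg0 p hp)

lemma integral_mul_add_indicator_sub_indicator_ge {g ψ : Ω → ℝ} (hg0 : ∀ p, 0 ≤ g p)
    (hg : Integrable g μ) (hψg : Integrable (fun p => ψ p * g p) μ) {s t : Set Ω}
    (hs : MeasurableSet s) (ht : MeasurableSet t) {a b α β : ℝ} (ha : 0 ≤ a) (hb : 0 ≤ b)
    (hα : ∀ p ∈ s, α ≤ ψ p) (hβ : ∀ p ∈ t, ψ p ≤ β) :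
    ∫ p, ψ p * g p ∂μ + a * (α * ∫ p in s, g p ∂μ) - b * (β * ∫ p in t, g p ∂μ)
      ≤ ∫ p, ψ p * (g p + a * s.indicator g p - b * t.indicator g p) ∂μ := by
  have hdistrib : ∀ p, ψ p * (g p + a * s.indicator g p - b * t.indicator g p)
      = ψ p * g p + a * s.indicator (fun q => ψ q * g q) p
        - b * t.indicator (fun q => ψ q * g q) p := fun p => by
    rw [Set.indicator_mul_right, Set.indicator_mul_right]; ring
  simp only [hdistrib]
  rw [integral_add_indicator_sub_indicator hψg hs ht]
  have hs' := mul_setIntegral_le_setIntegral_mul hs (fun p _ => hg0 p) hg.integrableOn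
    hψg.integrableOn hα
  have ht' := setIntegral_mul_le_mul_setIntegral ht (fun p _ => hg0 p) hg.integrableOn
    hψg.integrableOn hβ
  gcongr

end Perturbation

/-- The perturbation used in the proof of right-continuity of the LDP rate
function: if Q has density g w.r.t. the product of its marginals Q^⊥,
A, B are disjoint measurable sets of reals with c₁ = Q(ψ ∈ B), c₂ = Q(ψ ∈ A)
(ψ = φ'(h)), then for n large enough g_n := g + (c₁/n)·g·1{ψ∈A} - (c₂/n)·g·1{ψ∈B}
is a nonnegative density integrating to 1 w.r.t. Q^⊥; moreover if inf A > sup B,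
c₁ > 0 and c₂ > 0, then ∫ ψ g_n dQ^⊥ ≥ ∫ ψ g dQ^⊥ + (c₁c₂/n)(inf A - sup B)
> ∫ ψ g dQ^⊥. -/
theorem perturbation_increases_integral
    {X Y : Type*} [MeasurableSpace X] [MeasurableSpace Y]
    (Q : Measure (X × Y)) [IsProbabilityMeasure Q]
    (g : X × Y → ℝ) (hg0 : ∀ p, 0 ≤ g p)
    (hgdens : Q = ((Q.map Prod.fst).prod (Q.map Prod.snd)).withDensity
      (fun p => ENNReal.ofReal (g p)))
    (hgint : Integrable g ((Q.map Prod.fst).prod (Q.map Prod.snd)))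
    (ψ : X × Y → ℝ) (hψmeas : Measurable ψ)
    (hψgint : Integrable (fun p => ψ p * g p) ((Q.map Prod.fst).prod (Q.map Prod.snd)))
    (A B : Set ℝ) (hA : MeasurableSet A) (hB : MeasurableSet B) (hAB : Disjoint A B)
    (c₁ c₂ : ℝ)
    (hc₁ : c₁ = (Q {p | ψ p ∈ B}).toReal)
    (hc₂ : c₂ = (Q {p | ψ p ∈ A}).toReal)
    (gn : ℕ → (X × Y) → ℝ)
    (hgn : ∀ (n : ℕ) (p : X × Y), gn n p
      = g p + (c₁ / n) * Set.indicator {q | ψ q ∈ A} g p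
          - (c₂ / n) * Set.indicator {q | ψ q ∈ B} g p) :
    (∃ N : ℕ, ∀ n ≥ N, (∀ p, 0 ≤ gn n p) ∧
      ∫ p, gn n p ∂((Q.map Prod.fst).prod (Q.map Prod.snd)) = 1) ∧
    (BddBelow A → BddAbove B → sSup B < sInf A → 0 < c₁ → 0 < c₂ →
      ∀ n : ℕ, 1 ≤ n →
        (∫ p, ψ p * g p ∂((Q.map Prod.fst).prod (Q.map Prod.snd))
            + (c₁ * c₂ / n) * (sInf A - sSup B)
          ≤ ∫ p, ψ p * gn n p ∂((Q.map Prod.fst).prod (Q.map Prod.snd))) ∧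
        (∫ p, ψ p * g p ∂((Q.map Prod.fst).prod (Q.map Prod.snd))
          < ∫ p, ψ p * gn n p ∂((Q.map Prod.fst).prod (Q.map Prod.snd)))) := by
  set μ := (Q.map Prod.fst).prod (Q.map Prod.snd)
  set SA : Set (X × Y) := {q | ψ q ∈ A}
  set SB : Set (X × Y) := {q | ψ q ∈ B}
  have hSA : MeasurableSet SA := hψmeas hA
  have hSB : MeasurableSet SB := hψmeas hB
  have hmass : ∀ S, MeasurableSet S → (Q S).toReal = ∫ p in S, g p ∂μ := fun S hS => by
    rw [hgdens]
    exact toReal_withDensity_ofReal_apply hS (ae_of_all _ hg0) hgint.aestronglyMeasurable.restrict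
  have hc₁' : c₁ = ∫ p in SB, g p ∂μ := hc₁.trans (hmass SB hSB)
  have hc₂' : c₂ = ∫ p in SA, g p ∂μ := hc₂.trans (hmass SA hSA)
  have htotal : ∫ p, g p ∂μ = 1 := by simpa using (hmass Set.univ MeasurableSet.univ).symm
  have hc₁0 : 0 ≤ c₁ := hc₁ ▸ ENNReal.toReal_nonneg
  have hc₂0 : 0 ≤ c₂ := hc₂ ▸ ENNReal.toReal_nonneg
  have hc₂1 : c₂ ≤ 1 := hc₂ ▸ measureReal_le_one
  refine ⟨⟨1, fun n hn => ⟨fun p => ?_, ?_⟩⟩, fun hAbdd hBbdd hBA hc₁pos hc₂pos n hn => ?_⟩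
  · rw [hgn]
    exact add_indicator_sub_indicator_nonneg (hAB.preimage ψ) (by positivity)
      (div_le_one_of_le₀ (hc₂1.trans (by exact_mod_cast hn)) n.cast_nonneg) (hg0 p)
  · simp only [hgn]
    rw [integral_add_indicator_sub_indicator hgint hSA hSB, htotal, ← hc₁', ← hc₂']
    ring
  · have hmoment := integral_mul_add_indicator_sub_indicator_ge (μ := μ) hg0 hgint hψgint hSA hSB
      (a := c₁ / n) (b := c₂ / n) (by positivity) (by positivity)
      (fun p hp => csInf_le hAbdd hp) (fun p hp => le_csSup hBbdd hp)
    rw [← hc₁', ← hc₂'] at hmoment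
    simp only [hgn]
    have hgain : 0 < c₁ * c₂ / n * (sInf A - sSup B) :=
      mul_pos (div_pos (mul_pos hc₁pos hc₂pos) (Nat.cast_pos.mpr hn)) (sub_pos.mpr hBA)
    have hfirst : ∫ p, ψ p * g p ∂μ + c₁ * c₂ / n * (sInf A - sSup B)
        ≤ ∫ p, ψ p * (g p + c₁ / n * SA.indicator g p - c₂ / n * SB.indicator g p) ∂μ :=
      (le_of_eq (by ring)).trans hmoment
    exact ⟨hfirst, by linarith⟩
end
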